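/- arXiv:2512.03629 — 3 statements merged into one kernel-verified Lean document; each statement's English description precedes it below -/
import Mathlib

section
/- Let T be a finite tree on at least 2 vertices and let s be a nonzero real number. Then λ_max(M_T(s)) > 1. -/
open scoped Classical
open Matrix Polynomial

/-- The deformed Laplacian matrix `M_G(s) = I - s·A(G) + s²·(D(G) - I)` of a finite
simple graph `G`. -/
noncomputable def deformedLap {V : Type*} [Fintype V] (G : SimpleGraph V) (s : ℝ) :
    Matrix V V ℝ :=
  1 - s • G.adjMatrix ℝ + s ^ 2 • (Matrix.diagonal (fun v => (G.degree v : ℝ)) - 1)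

/-- The largest (real) eigenvalue of a matrix: the supremum of its real spectrum.
For a real symmetric matrix this is the maximal eigenvalue (the paper's `ρ`). -/
noncomputable def lamMax {n : Type*} [Fintype n] (M : Matrix n n ℝ) : ℝ :=
  sSup (spectrum ℝ M)

/-!
Test the Rayleigh quotient of `M_T(s)` on `x = e_u - s e_w` for an edge `uw` of `T`:
`xᵀ M x = (1 + s²) + s²(d_u - 1) + s⁴(d_w - 1) + 2s² > 1 + s² = xᵀ x`,
since both endpoints of an edge have degree at least one.
-/

theorem le_lamMax_of_mem_spectrum {n : Type*} [Fintype n] {M : Matrix n n ℝ} {r : ℝ}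
    (hr : r ∈ spectrum ℝ M) : r ≤ lamMax M :=
  le_csSup (Matrix.finite_real_spectrum (A := M)).bddAbove hr

theorem lt_lamMax_of_mul_dotProduct_lt {n : Type*} [Fintype n] {M : Matrix n n ℝ}
    (hM : M.IsHermitian) {c : ℝ} (x : n → ℝ) (hx : c * (x ⬝ᵥ x) < x ⬝ᵥ M *ᵥ x) :
    c < lamMax M := by
  by_contra! hle
  have hpsd : (algebraMap ℝ (Matrix n n ℝ) c - M).PosSemidef := by
    refine posSemidef_iff_isHermitian_and_spectrum_nonneg.mpr
      ⟨(isHermitian_diagonal _).sub hM, ?_⟩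
    rw [← spectrum.singleton_sub_eq]
    rintro _ ⟨_, rfl, r, hr, rfl⟩
    exact sub_nonneg.mpr ((le_lamMax_of_mem_spectrum hr).trans hle)
  have := hpsd.dotProduct_mulVec_nonneg x
  rw [star_trivial, sub_mulVec, dotProduct_sub, Algebra.algebraMap_eq_smul_one, smul_mulVec,
    one_mulVec, dotProduct_smul, smul_eq_mul] at this
  linarith

theorem isHermitian_deformedLap {V : Type*} [Fintype V] (G : SimpleGraph V) (s : ℝ) :
    (deformedLap G s).IsHermitian :=
  (isHermitian_one.sub ((G.isHermitian_adjMatrix ℝ).smul (IsSelfAdjoint.all s))).add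
    (((isHermitian_diagonal _).sub isHermitian_one).smul (IsSelfAdjoint.all _))

theorem dotProduct_deformedLap_mulVec_single_add_single {V : Type*} [Fintype V]
    {G : SimpleGraph V} {u w : V} (huw : G.Adj u w) (s a b : ℝ) :
    (Pi.single u a + Pi.single w b) ⬝ᵥ deformedLap G s *ᵥ (Pi.single u a + Pi.single w b) =
      a ^ 2 * (1 + s ^ 2 * (G.degree u - 1)) + b ^ 2 * (1 + s ^ 2 * (G.degree w - 1))
        - 2 * s * a * b := by
  simp [mulVec_add, dotProduct_add, add_dotProduct, mulVec_single, single_dotProduct,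
    deformedLap, one_apply, huw.ne, huw.ne.symm, huw, huw.symm]
  ring

theorem one_lt_lamMax_deformedLap {V : Type*} [Fintype V] {G : SimpleGraph V} {u w : V}
    (huw : G.Adj u w) {s : ℝ} (hs : s ≠ 0) : 1 < lamMax (deformedLap G s) := by
  refine lt_lamMax_of_mul_dotProduct_lt (isHermitian_deformedLap G s)
    (Pi.single u 1 + Pi.single w (-s)) ?_
  have hdu : (1 : ℝ) ≤ G.degree u := by
    exact_mod_cast (G.degree_pos_iff_exists_adj u).mpr ⟨w, huw⟩
  have hdw : (1 : ℝ) ≤ G.degree w := by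
    exact_mod_cast (G.degree_pos_iff_exists_adj w).mpr ⟨u, huw.symm⟩
  have hxx : (Pi.single u 1 + Pi.single w (-s)) ⬝ᵥ (Pi.single u 1 + Pi.single w (-s)) =
      1 + s ^ 2 := by
    simp [dotProduct_add, huw.ne, huw.ne.symm]
    ring
  have hs2 : 0 < s ^ 2 := by positivity
  rw [dotProduct_deformedLap_mulVec_single_add_single huw, hxx]
  nlinarith [mul_nonneg hs2.le (sub_nonneg.mpr hdu),
    mul_nonneg (pow_pos hs2 2).le (sub_nonneg.mpr hdw)]

/-- For a tree `T` on at least two vertices and nonzero `s`, `λ_max(M_T(s)) > 1`. -/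
theorem stmt_8 {V : Type*} [Fintype V] (T : SimpleGraph V) (hT : T.IsTree)
    (hn : 2 ≤ Fintype.card V) (s : ℝ) (hs : s ≠ 0) :
    1 < lamMax (deformedLap T s) := by
  have : Nontrivial V := Fintype.one_lt_card_iff_nontrivial.mp hn
  obtain ⟨u⟩ := hT.connected.nonempty
  obtain ⟨w, huw⟩ := hT.connected.preconnected.exists_adj_of_nontrivial u
  exact one_lt_lamMax_deformedLap huw hs
end

section
/- Let T be a finite tree whose maximum degree satisfies Δ(T) ≥ 4, and let s be a nonzero real number. Then λ_max(M_T(s)) > 1 + 2|s| + s^2. -/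
open scoped Classical
open Matrix Polynomial

/-!
Rayleigh quotient of a star-shaped test vector. Let `v` have degree `d ≥ 4` and let `x` be `1` at
`v`, `a = -sign(s)/2` at the neighbours of `v` and `0` elsewhere. Since the neighbours of `v` are
pairwise non-adjacent, `xᵀAx = 2da`, so `-s·xᵀAx = d|s|`; every neighbour has degree at least
`1`. Hence `xᵀMx ≥ 1 + d/4 + d|s| + (d - 1)s²`, which exceeds
`(1 + 2|s| + s²)(1 + d/4) = (1 + 2|s| + s²)‖x‖²` because `d/2 ≥ 2` and `3d/4 > 2`.
-/

theorem Matrix.IsHermitian.dotProduct_mulVec_le_lamMax {n : Type*} [Fintype n]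
    {M : Matrix n n ℝ} (hM : M.IsHermitian) (x : n → ℝ) :
    x ⬝ᵥ (M *ᵥ x) ≤ lamMax M * (x ⬝ᵥ x) := by
  have hpsd : (lamMax M • 1 - M).PosSemidef := by
    rw [posSemidef_iff_isHermitian_and_spectrum_nonneg]
    refine ⟨(isHermitian_one.smul (IsSelfAdjoint.all _)).sub hM, ?_⟩
    rw [← Algebra.algebraMap_eq_smul_one, ← spectrum.singleton_sub_eq]
    rintro _ ⟨_, rfl, μ, hμ, rfl⟩
    exact sub_nonneg.2 (le_csSup M.finite_real_spectrum.bddAbove hμ)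
  simpa [sub_mulVec, dotProduct_sub, smul_mulVec, dotProduct_smul] using
    hpsd.dotProduct_mulVec_nonneg x

namespace SimpleGraph

variable {V : Type*} (G : SimpleGraph V)

section

variable [Fintype V]

theorem isHermitian_deformedLap (s : ℝ) : (deformedLap G s).IsHermitian :=
  (isHermitian_one.sub ((G.isHermitian_adjMatrix ℝ).smul (IsSelfAdjoint.all s))).add
    (((isHermitian_diagonal _).sub isHermitian_one).smul (IsSelfAdjoint.all _))

theorem dotProduct_deformedLap_mulVec (s : ℝ) (x : V → ℝ) :
    x ⬝ᵥ (deformedLap G s *ᵥ x) = (1 - s ^ 2) * (x ⬝ᵥ x) - s * (x ⬝ᵥ (G.adjMatrix ℝ *ᵥ x))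
      + s ^ 2 * ∑ i, G.degree i * x i * x i := by
  have hdeg := G.dotProduct_mulVec_degMatrix x
  simp only [degMatrix] at hdeg
  simp only [deformedLap, add_mulVec, sub_mulVec, smul_mulVec, one_mulVec, dotProduct_add,
    dotProduct_sub, dotProduct_smul, smul_eq_mul, hdeg]
  ring

end

noncomputable def starVector (v : V) (a : ℝ) : V → ℝ :=
  Pi.single v 1 + a • fun w => if G.Adj v w then 1 else 0

variable {G} {v : V} {a : ℝ}

@[simp]
theorem starVector_self : G.starVector v a v = 1 := by
  simp [starVector]

theorem starVector_of_adj {w : V} (h : G.Adj v w) : G.starVector v a w = a := by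
  simp [starVector, h, h.ne']

variable [Fintype V]

theorem dotProduct_starVector (f : V → ℝ) :
    f ⬝ᵥ G.starVector v a = f v + a * ∑ w ∈ G.neighborFinset v, f w := by
  rw [starVector, dotProduct_add, dotProduct_smul, dotProduct_single, mul_one, smul_eq_mul,
    neighborFinset_eq_filter, Finset.sum_filter]
  simp only [dotProduct, mul_ite, mul_one, mul_zero]

theorem starVector_dotProduct_self :
    G.starVector v a ⬝ᵥ G.starVector v a = 1 + G.degree v * a ^ 2 := by
  rw [dotProduct_starVector, starVector_self,
    Finset.sum_congr rfl fun w hw => starVector_of_adj ((G.mem_neighborFinset v w).1 hw)]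
  simp only [Finset.sum_const, card_neighborFinset_eq_degree, nsmul_eq_mul]
  ring

theorem starVector_dotProduct_adjMatrix_mulVec (hG : G.CliqueFree 3) :
    G.starVector v a ⬝ᵥ (G.adjMatrix ℝ *ᵥ G.starVector v a) = 2 * G.degree v * a := by
  have hrow (u : V) : (G.adjMatrix ℝ *ᵥ G.starVector v a) u
      = G.adjMatrix ℝ u v + a * ∑ w ∈ G.neighborFinset v, G.adjMatrix ℝ u w :=
    dotProduct_starVector _
  have hdeg : ∑ w ∈ G.neighborFinset v, G.adjMatrix ℝ v w = G.degree v := by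
    rw [Finset.sum_congr rfl fun w hw => by
      rw [adjMatrix_apply, if_pos ((G.mem_neighborFinset v w).1 hw)]]
    simp
  have hnbr : ∀ w ∈ G.neighborFinset v, (G.adjMatrix ℝ *ᵥ G.starVector v a) w = 1 := by
    intro w hw
    rw [mem_neighborFinset] at hw
    rw [hrow, adjMatrix_apply, if_pos hw.symm, Finset.sum_eq_zero, mul_zero, add_zero]
    intro u hu
    rw [mem_neighborFinset] at hu
    have hwu : ¬G.Adj w u := by
      rcases eq_or_ne w u with rfl | hne
      · exact G.irrefl
      · exact G.isIndepSet_neighborSet_of_triangleFree hG v hw hu hne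
    rw [adjMatrix_apply, if_neg hwu]
  rw [dotProduct_comm, dotProduct_starVector, Finset.sum_congr rfl hnbr, hrow, hdeg,
    adjMatrix_apply, if_neg (G.irrefl), Finset.sum_const, card_neighborFinset_eq_degree,
    nsmul_one]
  ring

theorem degree_mul_one_add_sq_le_sum_degree_mul_starVector :
    G.degree v * (1 + a ^ 2) ≤ ∑ w, G.degree w * G.starVector v a w * G.starVector v a w := by
  calc (G.degree v : ℝ) * (1 + a ^ 2) = G.degree v + ∑ w ∈ G.neighborFinset v, a ^ 2 := by
        rw [Finset.sum_const, card_neighborFinset_eq_degree, nsmul_eq_mul]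
        ring
    _ ≤ G.degree v + ∑ w ∈ G.neighborFinset v, (G.degree w : ℝ) * a ^ 2 := by
        gcongr with w hw
        refine le_mul_of_one_le_left (sq_nonneg a) (Nat.one_le_cast.2 ?_)
        exact (G.degree_pos_iff_exists_adj w).2 ⟨v, ((G.mem_neighborFinset v w).1 hw).symm⟩
    _ = (fun w => G.degree w * G.starVector v a w) ⬝ᵥ G.starVector v a := by
        rw [dotProduct_starVector, starVector_self, mul_one, Finset.mul_sum]
        refine congrArg _ (Finset.sum_congr rfl fun w hw => ?_)
        rw [starVector_of_adj ((G.mem_neighborFinset v w).1 hw)]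
        ring

theorem one_add_two_mul_abs_add_sq_lt_lamMax_deformedLap (hG : G.CliqueFree 3)
    (hv : 4 ≤ G.degree v) {s : ℝ} (hs : s ≠ 0) :
    1 + 2 * |s| + s ^ 2 < lamMax (deformedLap G s) := by
  have habs : 0 < |s| := abs_pos.2 hs
  obtain ⟨a, hsa, ha⟩ : ∃ a : ℝ, s * a = -|s| / 2 ∧ a ^ 2 = 1 / 4 := by
    refine ⟨-(s / |s|) / 2, ?_, ?_⟩
    · field_simp
      rw [sq_abs]
    · rw [div_pow, neg_sq, div_pow, sq_abs]
      field_simp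
      norm_num
  set x := G.starVector v a
  have hd : (4 : ℝ) ≤ G.degree v := by exact_mod_cast hv
  have hxx : 0 < x ⬝ᵥ x := by
    rw [starVector_dotProduct_self]
    positivity
  have hquad : (1 + 2 * |s| + s ^ 2) * (x ⬝ᵥ x) < x ⬝ᵥ (deformedLap G s *ᵥ x) := by
    have hD := degree_mul_one_add_sq_le_sum_degree_mul_starVector (G := G) (v := v) (a := a)
    rw [dotProduct_deformedLap_mulVec, starVector_dotProduct_self,
      starVector_dotProduct_adjMatrix_mulVec hG]
    rw [ha] at hD ⊢
    nlinarith [sq_abs s]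
  exact lt_of_mul_lt_mul_right
    (hquad.trans_le ((G.isHermitian_deformedLap s).dotProduct_mulVec_le_lamMax x)) hxx.le

end SimpleGraph

/-- If a tree `T` has maximum degree at least `4` and `s ≠ 0`, then
`λ_max(M_T(s)) > 1 + 2|s| + s²`. -/
theorem stmt_11 {V : Type*} [Fintype V] (T : SimpleGraph V) (hT : T.IsTree)
    (hΔ : 4 ≤ T.maxDegree) (s : ℝ) (hs : s ≠ 0) :
    1 + 2 * |s| + s ^ 2 < lamMax (deformedLap T s) := by
  have : Nonempty V := hT.connected.nonempty
  obtain ⟨v, hv⟩ := T.exists_maximal_degree_vertex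
  exact SimpleGraph.one_add_two_mul_abs_add_sq_lt_lamMax_deformedLap
    (hT.isAcyclic.cliqueFree le_rfl) (hv ▸ hΔ) hs
end

section
/- Let T be a finite tree whose maximum degree satisfies Δ(T) ≥ 3, and let s be a nonzero real number. Then λ_max(M_T(s)) > 1 + √3·|s| + s^2. -/
open scoped Classical
open Matrix Polynomial

/-!
Test the Rayleigh quotient of `M_T(s)` on a vector supported on a claw `K_{1,3}` of `T`: a vertex
of degree at least `3` and three of its neighbours, pairwise non-adjacent because a tree has no
triangles. Since `λ_max(M) • 1 - M` is positive semidefinite, so is each of its principal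
submatrices, hence every test vector on the claw bounds `λ_max` from below. The weights
`(|s| (√3 + |s|), -s, -s, -s)` give a quotient exceeding `1 + √3 |s| + s²` by a term of
order `|s|³`.
-/

open scoped MatrixOrder in
theorem Matrix.IsHermitian.posSemidef_lamMax_smul_one_sub {n : Type*} [Fintype n]
    {M : Matrix n n ℝ} (hM : M.IsHermitian) : (lamMax M • 1 - M).PosSemidef := by
  have hle : M ≤ algebraMap ℝ (Matrix n n ℝ) (lamMax M) :=
    le_algebraMap_of_spectrum_le (fun _ hx ↦ le_csSup (finite_spectrum M).bddAbove hx) hM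
  rwa [Algebra.algebraMap_eq_smul_one] at hle

theorem Matrix.IsHermitian.dotProduct_submatrix_mulVec_le_lamMax {m n : Type*} [Fintype m]
    [Fintype n] {M : Matrix n n ℝ} (hM : M.IsHermitian) {e : m → n} (he : Function.Injective e)
    (y : m → ℝ) : y ⬝ᵥ (M.submatrix e e *ᵥ y) ≤ lamMax M * (y ⬝ᵥ y) := by
  have h := (hM.posSemidef_lamMax_smul_one_sub.submatrix e).dotProduct_mulVec_nonneg y
  have hsub : (lamMax M • 1 - M).submatrix e e = lamMax M • 1 - M.submatrix e e := by
    rw [← submatrix_one e he]; rfl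
  rw [hsub, sub_mulVec, dotProduct_sub, smul_mulVec, one_mulVec, dotProduct_smul, star_trivial,
    smul_eq_mul] at h
  linarith

theorem SimpleGraph.IsAcyclic.not_adj_of_adj_of_adj {V : Type*} {G : SimpleGraph V}
    (hG : G.IsAcyclic) {v a b : V} (ha : G.Adj v a) (hb : G.Adj v b) : ¬G.Adj a b :=
  fun hab ↦ isIndepSet_neighborSet_of_triangleFree G (hG.cliqueFree le_rfl) v ha hb hab.ne hab

section deformedLap

variable {V : Type*} [Fintype V] (G : SimpleGraph V) (s : ℝ)

theorem deformedLap_isHermitian : (deformedLap G s).IsHermitian := by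
  rw [isHermitian_iff_isSymm, deformedLap]
  exact (isSymm_one.sub (G.isSymm_adjMatrix.smul s)).add
    (((isSymm_diagonal _).sub isSymm_one).smul _)

theorem deformedLap_apply_self (v : V) :
    deformedLap G s v v = 1 + s ^ 2 * (G.degree v - 1) := by
  simp [deformedLap]

variable {G}

theorem deformedLap_apply_of_adj {u v : V} (h : G.Adj u v) : deformedLap G s u v = -s := by
  simp [deformedLap, h, h.ne]

theorem deformedLap_apply_of_ne_of_not_adj {u v : V} (hne : u ≠ v) (h : ¬G.Adj u v) :
    deformedLap G s u v = 0 := by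
  simp [deformedLap, h, hne]

end deformedLap

theorem SimpleGraph.exists_three_adj_of_three_le_degree {V : Type*} {G : SimpleGraph V} {v : V}
    [Fintype (G.neighborSet v)] (hv : 3 ≤ G.degree v) :
    ∃ u₁ u₂ u₃, G.Adj v u₁ ∧ G.Adj v u₂ ∧ G.Adj v u₃ ∧ u₁ ≠ u₂ ∧ u₁ ≠ u₃ ∧ u₂ ≠ u₃ := by
  rw [← G.card_neighborFinset_eq_degree] at hv
  obtain ⟨t, hsub, hcard⟩ := Finset.exists_subset_card_eq hv
  obtain ⟨u₁, u₂, u₃, h₁₂, h₁₃, h₂₃, rfl⟩ := Finset.card_eq_three.mp hcard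
  simp only [Finset.insert_subset_iff, Finset.singleton_subset_iff, mem_neighborFinset] at hsub
  exact ⟨u₁, u₂, u₃, hsub.1, hsub.2.1, hsub.2.2, h₁₂, h₁₃, h₂₃⟩

theorem SimpleGraph.injective_claw {V : Type*} {G : SimpleGraph V} {v u₁ u₂ u₃ : V}
    (h₁ : G.Adj v u₁) (h₂ : G.Adj v u₂) (h₃ : G.Adj v u₃)
    (h₁₂ : u₁ ≠ u₂) (h₁₃ : u₁ ≠ u₃) (h₂₃ : u₂ ≠ u₃) : Function.Injective ![v, u₁, u₂, u₃] := by
  intro i j hij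
  fin_cases i <;> fin_cases j <;> simp_all [h₁.ne, h₂.ne, h₃.ne, h₁.ne', h₂.ne', h₃.ne',
    h₁₂.symm, h₁₃.symm, h₂₃.symm]

theorem SimpleGraph.IsAcyclic.dotProduct_deformedLap_claw_mulVec {V : Type*} [Fintype V]
    {G : SimpleGraph V} (hG : G.IsAcyclic) {v u₁ u₂ u₃ : V}
    (h₁ : G.Adj v u₁) (h₂ : G.Adj v u₂) (h₃ : G.Adj v u₃)
    (h₁₂ : u₁ ≠ u₂) (h₁₃ : u₁ ≠ u₃) (h₂₃ : u₂ ≠ u₃) (s x c : ℝ) :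
    ![x, c, c, c] ⬝ᵥ ((deformedLap G s).submatrix ![v, u₁, u₂, u₃] ![v, u₁, u₂, u₃] *ᵥ
      ![x, c, c, c]) = x ^ 2 * (1 + s ^ 2 * (G.degree v - 1))
        + c ^ 2 * (3 + s ^ 2 * (G.degree u₁ + G.degree u₂ + G.degree u₃ - 3)) - 6 * s * x * c := by
  simp only [dotProduct, mulVec, submatrix_apply, Fin.sum_univ_four, cons_val_zero, cons_val_one,
    cons_val, deformedLap_apply_self,
    deformedLap_apply_of_adj _ h₁, deformedLap_apply_of_adj _ h₂, deformedLap_apply_of_adj _ h₃,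
    deformedLap_apply_of_adj _ h₁.symm, deformedLap_apply_of_adj _ h₂.symm,
    deformedLap_apply_of_adj _ h₃.symm,
    deformedLap_apply_of_ne_of_not_adj _ h₁₂ (hG.not_adj_of_adj_of_adj h₁ h₂),
    deformedLap_apply_of_ne_of_not_adj _ h₁₃ (hG.not_adj_of_adj_of_adj h₁ h₃),
    deformedLap_apply_of_ne_of_not_adj _ h₂₃ (hG.not_adj_of_adj_of_adj h₂ h₃),
    deformedLap_apply_of_ne_of_not_adj _ h₁₂.symm (hG.not_adj_of_adj_of_adj h₂ h₁),
    deformedLap_apply_of_ne_of_not_adj _ h₁₃.symm (hG.not_adj_of_adj_of_adj h₃ h₁),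
    deformedLap_apply_of_ne_of_not_adj _ h₂₃.symm (hG.not_adj_of_adj_of_adj h₃ h₂)]
  ring

-- The two sides differ by `t ^ 3 * (√3 + t)`: the weight `√3 + t` cancels all lower-order terms.
theorem one_add_sqrt_three_mul_add_sq_mul_lt {t : ℝ} (ht : 0 < t) :
    (1 + √3 * t + t ^ 2) * ((√3 + t) ^ 2 + 3)
      < (√3 + t) ^ 2 * (1 + 2 * t ^ 2) + 3 + 6 * (√3 + t) * t := by
  have h3 : √3 ^ 2 = 3 := Real.sq_sqrt (by norm_num)
  nlinarith [mul_pos (pow_pos ht 3) (by positivity : 0 < √3 + t)]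

theorem SimpleGraph.IsAcyclic.lt_lamMax_deformedLap {V : Type*} [Fintype V]
    {G : SimpleGraph V} (hG : G.IsAcyclic) {v : V} (hv : 3 ≤ G.degree v) {s : ℝ} (hs : s ≠ 0) :
    1 + √3 * |s| + s ^ 2 < lamMax (deformedLap G s) := by
  obtain ⟨u₁, u₂, u₃, h₁, h₂, h₃, h₁₂, h₁₃, h₂₃⟩ := G.exists_three_adj_of_three_le_degree hv
  set t := |s|
  set a := √3 + t
  have ht : 0 < t := abs_pos.2 hs
  have hst : s ^ 2 = t ^ 2 := (sq_abs s).symm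
  have hdv : (3 : ℝ) ≤ G.degree v := by exact_mod_cast hv
  have hdu : ∀ u, G.Adj v u → (1 : ℝ) ≤ G.degree u := fun u hu ↦
    by exact_mod_cast (G.degree_pos_iff_exists_adj u).2 ⟨v, hu.symm⟩
  -- the leaf weights `-s` make the cross term `-6 s x c` positive whatever the sign of `s`
  set y : Fin 4 → ℝ := ![t * a, -s, -s, -s]
  have hyy : y ⬝ᵥ y = t ^ 2 * (a ^ 2 + 3) := by
    simp only [y, dotProduct, Fin.sum_univ_four, cons_val_zero, cons_val_one, cons_val,
      mul_neg, neg_mul, neg_neg]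
    linear_combination 3 * hst
  have hlower : t ^ 2 * (a ^ 2 * (1 + 2 * t ^ 2) + 3 + 6 * a * t)
      ≤ y ⬝ᵥ ((deformedLap G s).submatrix ![v, u₁, u₂, u₃] ![v, u₁, u₂, u₃] *ᵥ y) := by
    have hcross : 6 * s * (t * a) * -s = -(6 * a * t * t ^ 2) := by
      linear_combination (-6 * t * a) * hst
    rw [hG.dotProduct_deformedLap_claw_mulVec h₁ h₂ h₃ h₁₂ h₁₃ h₂₃, hcross, neg_sq, hst]
    nlinarith [mul_nonneg (mul_nonneg (sq_nonneg (t * a)) (sq_nonneg t)) (sub_nonneg.2 hdv),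
      mul_nonneg (pow_nonneg ht.le 4) (by linarith [hdu u₁ h₁, hdu u₂ h₂, hdu u₃ h₃] :
        (0 : ℝ) ≤ G.degree u₁ + G.degree u₂ + G.degree u₃ - 3)]
  have hkey : (1 + √3 * t + t ^ 2) * (a ^ 2 + 3) < a ^ 2 * (1 + 2 * t ^ 2) + 3 + 6 * a * t :=
    one_add_sqrt_three_mul_add_sq_mul_lt ht
  have hpos : 0 < t ^ 2 * (a ^ 2 + 3) := by positivity
  rw [hst]
  refine lt_of_mul_lt_mul_right ?_ hpos.le
  calc (1 + √3 * t + t ^ 2) * (t ^ 2 * (a ^ 2 + 3))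
      < t ^ 2 * (a ^ 2 * (1 + 2 * t ^ 2) + 3 + 6 * a * t) := by
        linarith [mul_lt_mul_of_pos_left hkey (pow_pos ht 2)]
    _ ≤ _ := hlower
    _ ≤ lamMax (deformedLap G s) * (y ⬝ᵥ y) :=
        (deformedLap_isHermitian G s).dotProduct_submatrix_mulVec_le_lamMax
          (G.injective_claw h₁ h₂ h₃ h₁₂ h₁₃ h₂₃) y
    _ = lamMax (deformedLap G s) * (t ^ 2 * (a ^ 2 + 3)) := by rw [hyy]

/-- If a tree `T` has maximum degree at least `3` and `s ≠ 0`, then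
`λ_max(M_T(s)) > 1 + √3·|s| + s²`. -/
theorem stmt_12 {V : Type*} [Fintype V] (T : SimpleGraph V) (hT : T.IsTree)
    (hΔ : 3 ≤ T.maxDegree) (s : ℝ) (hs : s ≠ 0) :
    1 + Real.sqrt 3 * |s| + s ^ 2 < lamMax (deformedLap T s) := by
  have : Nonempty V := hT.connected.nonempty
  obtain ⟨v, hv⟩ := T.exists_maximal_degree_vertex
  exact hT.isAcyclic.lt_lamMax_deformedLap (hv ▸ hΔ) hs
end
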